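/- The function Bi is entire (complex-differentiable on all of ℂ, with entire derivative), and it satisfies the Airy differential equation: for every z ∈ ℂ, the second derivative of Bi at z equals z·Bi(z). -/
import Mathlib


open Complex

/-- The Airy function of the second kind `Bi`, defined by its Maclaurin series. -/
noncomputable def Bi (z : ℂ) : ℂ :=
  (((2 / ((3 : ℝ) ^ ((2 : ℝ) / 3) * Real.pi)) : ℝ) : ℂ) *
    ∑' n : ℕ,
      ((Real.Gamma ((n + 1) / 3) / n.factorial * Real.sin (2 * (n + 1) * Real.pi / 3) ^ 2 : ℝ) : ℂ) *
        ((((3 : ℝ) ^ ((1 : ℝ) / 3) : ℝ) : ℂ) * z) ^ n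

open Filter

noncomputable def biR (n : ℕ) : ℝ :=
  (2 / ((3 : ℝ) ^ ((2 : ℝ) / 3) * Real.pi)) *
    (Real.Gamma ((n + 1) / 3) / n.factorial * Real.sin (2 * (n + 1) * Real.pi / 3) ^ 2) *
    ((3 : ℝ) ^ ((1 : ℝ) / 3)) ^ n

lemma biR_rec (n : ℕ) : ((n : ℝ) + 3) * ((n : ℝ) + 2) * biR (n + 3) = biR n := by
  have hγ : Real.Gamma ((↑(n+3) + 1)/3) = (((n:ℝ)+1)/3) * Real.Gamma (((n:ℝ)+1)/3) := by
    have h : ((↑(n+3):ℝ) + 1)/3 = ((n:ℝ)+1)/3 + 1 := by push_cast; ring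
    rw [h, Real.Gamma_add_one (by positivity)]
  have hs : Real.sin (2*(↑(n+3)+1)*Real.pi/3) = Real.sin (2*((n:ℝ)+1)*Real.pi/3) := by
    have h : (2*((↑(n+3):ℝ)+1)*Real.pi/3) = 2*((n:ℝ)+1)*Real.pi/3 + 2*Real.pi := by
      push_cast; ring
    rw [h, Real.sin_add_two_pi]
  have hfac : (((n+3).factorial : ℝ)) = ((n:ℝ)+3)*((n:ℝ)+2)*((n:ℝ)+1)*(n.factorial : ℝ) := by
    rw [show n+3 = (n+2)+1 from rfl, Nat.factorial_succ, Nat.factorial_succ, Nat.factorial_succ]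
    push_cast; ring
  have hc3 : (((3:ℝ)^((1:ℝ)/3)))^(3:ℕ) = 3 := by
    rw [← Real.rpow_natCast ((3:ℝ)^((1:ℝ)/3)) 3, ← Real.rpow_mul (by norm_num)]
    norm_num
  have hfne : ((n.factorial : ℝ)) ≠ 0 := by positivity
  unfold biR
  rw [hγ, hs, hfac, pow_add, hc3]
  field_simp

lemma biR_two : biR 2 = 0 := by
  have h : 2*((↑(2:ℕ):ℝ)+1)*Real.pi/3 = 2*Real.pi := by push_cast; ring
  unfold biR
  rw [h, Real.sin_two_pi]
  ring

lemma biR_absrec (n : ℕ) : |biR n| = ((n:ℝ)+3)*((n:ℝ)+2)*|biR (n+3)| := by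
  conv_lhs => rw [← biR_rec n]
  rw [abs_mul, abs_mul, _root_.abs_of_nonneg (by positivity : (0:ℝ) ≤ (n:ℝ)+3),
    _root_.abs_of_nonneg (by positivity : (0:ℝ) ≤ (n:ℝ)+2)]

lemma summable_aux {u : ℕ → ℝ} (hu : ∀ n, 0 ≤ u n)
    (h : ∀ n : ℕ, ((n:ℝ)+1) * u (n+3) ≤ u n) {R : ℝ} (hR : 0 ≤ R) :
    Summable (fun n => u n * R^n) := by
  have key : ∀ j : ℕ, Summable (fun k => u (k*3+j) * R^(k*3+j)) := by
    intro j
    obtain ⟨N, hN⟩ := exists_nat_ge (2*R^3)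
    apply summable_of_ratio_norm_eventually_le (r := 1/2) (by norm_num)
    filter_upwards [eventually_ge_atTop N] with k hk
    set m := k*3+j with hm
    have e1 : (k+1)*3+j = m+3 := by rw [hm]; ring
    rw [e1, Real.norm_of_nonneg (mul_nonneg (hu _) (pow_nonneg hR _)),
      Real.norm_of_nonneg (mul_nonneg (hu _) (pow_nonneg hR _))]
    have hNk : (N:ℝ) ≤ (m:ℝ) := by
      have : N ≤ m := le_trans hk (by omega)
      exact_mod_cast this
    have h2 : 2*R^3 ≤ (m:ℝ)+1 := by linarith [hN]
    have hpow : (0:ℝ) ≤ R^m := pow_nonneg hR _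
    have h1 : ((m:ℝ)+1) * u (m+3) * R^m ≤ u m * R^m :=
      mul_le_mul_of_nonneg_right (h m) hpow
    have h3 : R^(m+3) = R^3 * R^m := by ring
    rw [h3]
    nlinarith [mul_nonneg (hu (m+3)) hpow, mul_nonneg (mul_nonneg (hu (m+3)) hpow) hR]
  have e := ((Nat.divModEquiv 3).symm.summable_iff
      (f := fun n => u n * R^n))
  rw [← e]
  have hfe : ((fun n => u n * R^n) ∘ ⇑(Nat.divModEquiv 3).symm)
      = fun p : ℕ × Fin 3 => u (p.1*3+(p.2:ℕ)) * R^(p.1*3+(p.2:ℕ)) := rfl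
  rw [hfe, summable_prod_of_nonneg (fun p => mul_nonneg (hu _) (pow_nonneg hR _))]
  refine ⟨fun k => Summable.of_finite, ?_⟩
  have hcongr : ∀ k : ℕ, ∑' j : Fin 3, u (k*3+(j:ℕ)) * R^(k*3+(j:ℕ))
      = u (k*3+0) * R^(k*3+0) + u (k*3+1) * R^(k*3+1) + u (k*3+2) * R^(k*3+2) := by
    intro k
    rw [tsum_fintype, Fin.sum_univ_three]
    rfl
  exact Summable.congr (((key 0).add (key 1)).add (key 2)) fun k => by
    rw [hcongr k]

lemma hasDerivAt_tsum_pow (b : ℕ → ℂ)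
    (hb' : ∀ R : ℝ, 0 ≤ R → Summable (fun n : ℕ => ((n:ℝ)+1) * ‖b (n+1)‖ * R^n)) (z : ℂ) :
    HasDerivAt (fun w => ∑' n, b n * w^n) (∑' n : ℕ, ((n:ℂ)+1) * b (n+1) * z^n) z := by
  set R : ℝ := ‖z‖ + 1 with hRdef
  have hR : 0 < R := by positivity
  have hz : z ∈ Metric.ball (0:ℂ) R := by
    rw [Metric.mem_ball, dist_zero_right]; simp [hRdef]
  have hu : Summable (fun n : ℕ => (n:ℝ) * ‖b n‖ * R^(n-1)) := by
    apply (summable_nat_add_iff 1).1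
    refine (hb' R hR.le).congr fun n => ?_
    push_cast
    simp only [Nat.add_sub_cancel]
  have sum0 : Summable (fun n => b n * (0:ℂ)^n) := by
    apply summable_of_ne_finset_zero (s := {0})
    intro n hn
    simp only [Finset.mem_singleton] at hn
    rw [zero_pow hn, mul_zero]
  have main := hasDerivAt_tsum_of_isPreconnected hu Metric.isOpen_ball
    (convex_ball (0:ℂ) R).isPreconnected
    (g := fun n w => b n * w^n) (g' := fun n w => b n * ((n:ℂ) * w^(n-1)))
    (fun n y _ => (hasDerivAt_pow n y).const_mul (b n))
    (fun n y hy => ?_) (Metric.mem_ball_self hR) sum0 hz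
  · have hsum' : Summable (fun n : ℕ => b n * ((n:ℂ) * z^(n-1))) := by
      apply Summable.of_norm
      refine hu.of_nonneg_of_le (fun n => norm_nonneg _) fun n => ?_
      rw [norm_mul, norm_mul, norm_pow, norm_natCast]
      have h1 : ‖z‖^(n-1) ≤ R^(n-1) := by
        apply pow_le_pow_left₀ (norm_nonneg z) (by simp [hRdef])
      rw [show ‖b n‖ * ((n:ℝ) * ‖z‖^(n-1)) = (n:ℝ) * ‖b n‖ * ‖z‖^(n-1) by ring]
      exact mul_le_mul_of_nonneg_left h1 (mul_nonneg (n.cast_nonneg (α := ℝ)) (norm_nonneg (b n)))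
    have heq : (∑' n : ℕ, b n * ((n:ℂ) * z^(n-1))) = ∑' n : ℕ, ((n:ℂ)+1) * b (n+1) * z^n := by
      rw [Summable.tsum_eq_zero_add hsum']
      simp only [Nat.cast_zero, zero_mul, mul_zero, zero_add]
      exact tsum_congr fun n => by rw [Nat.add_sub_cancel]; push_cast; ring
    rw [← heq]
    exact main
  · rw [norm_mul, norm_mul, norm_pow, norm_natCast]
    have hyR : ‖y‖ ≤ R := le_of_lt (by rwa [Metric.mem_ball, dist_zero_right] at hy)
    have h1 : ‖y‖^(n-1) ≤ R^(n-1) := pow_le_pow_left₀ (norm_nonneg y) hyR _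
    rw [show ‖b n‖ * ((n:ℝ) * ‖y‖^(n-1)) = (n:ℝ) * ‖b n‖ * ‖y‖^(n-1) by ring]
    exact mul_le_mul_of_nonneg_left h1 (mul_nonneg (n.cast_nonneg (α := ℝ)) (norm_nonneg (b n)))

noncomputable def cB (n : ℕ) : ℂ := ((biR n : ℝ) : ℂ)
noncomputable def cB1 (n : ℕ) : ℂ := ((n:ℂ)+1) * cB (n+1)

lemma norm_cB (n : ℕ) : ‖cB n‖ = |biR n| := by
  rw [cB, Complex.norm_real, Real.norm_eq_abs]

lemma norm_cB1 (n : ℕ) : ‖cB1 n‖ = ((n:ℝ)+1) * |biR (n+1)| := by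
  rw [cB1, norm_mul, norm_cB]
  congr 1
  rw [show ((n:ℂ)+1) = ((n+1:ℕ):ℂ) by push_cast; ring, Complex.norm_natCast]
  push_cast; ring

lemma HB1 (R : ℝ) (hR : 0 ≤ R) :
    Summable (fun n : ℕ => ((n:ℝ)+1) * ‖cB (n+1)‖ * R^n) := by
  refine summable_aux (u := fun n => ((n:ℝ)+1) * ‖cB (n+1)‖)
    (fun n => mul_nonneg (by positivity) (norm_nonneg _)) (fun n => ?_) hR
  simp only [norm_cB]
  have e := biR_absrec (n+1)
  have e2 : n+1+3 = n+3+1 := by omega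
  rw [e2] at e
  push_cast at e ⊢
  nlinarith [abs_nonneg (biR (n+3+1)), Nat.cast_nonneg (α := ℝ) n,
    mul_nonneg (abs_nonneg (biR (n+3+1))) (Nat.cast_nonneg (α := ℝ) n),
    mul_nonneg (mul_nonneg (abs_nonneg (biR (n+3+1))) (Nat.cast_nonneg (α := ℝ) n))
      (Nat.cast_nonneg (α := ℝ) n)]

lemma HB2 (R : ℝ) (hR : 0 ≤ R) :
    Summable (fun n : ℕ => ((n:ℝ)+1) * ‖cB1 (n+1)‖ * R^n) := by
  refine summable_aux (u := fun n => ((n:ℝ)+1) * ‖cB1 (n+1)‖)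
    (fun n => mul_nonneg (by positivity) (norm_nonneg _)) (fun n => ?_) hR
  simp only [norm_cB1]
  have e := biR_absrec (n+2)
  have e2 : n+2+3 = n+3+1+1 := by omega
  rw [e2] at e
  have e4 : n+1+1 = n+2 := by omega
  push_cast at e ⊢
  rw [e4, e]
  have hA := abs_nonneg (biR (n+3+1+1))
  have hn := Nat.cast_nonneg (α := ℝ) n
  have p1 := mul_nonneg hA hn
  have p2 := mul_nonneg p1 hn
  have p3 := mul_nonneg p2 hn
  have p4 := mul_nonneg p3 hn
  nlinarith [hA, hn, p1, p2, p3, p4]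

lemma cB_rec (n : ℕ) : ((n:ℂ)+3)*((n:ℂ)+2)*cB (n+3) = cB n := by
  have h := biR_rec n
  unfold cB
  rw [← h]
  push_cast
  ring

lemma normNA (n : ℕ) : ‖((n:ℂ)+1)‖ = (n:ℝ)+1 := by
  rw [show ((n:ℂ)+1) = ((n+1:ℕ):ℂ) by push_cast; ring, Complex.norm_natCast]
  push_cast; ring

lemma Bi_eq : Bi = fun z => ∑' n : ℕ, cB n * z^n := by
  funext z
  unfold Bi cB biR
  rw [← tsum_mul_left]
  refine tsum_congr fun n => ?_
  simp only [Complex.ofReal_mul, Complex.ofReal_pow, mul_pow]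
  ring

lemma hd1 (z : ℂ) :
    HasDerivAt (fun w => ∑' n : ℕ, cB n * w^n) (∑' n : ℕ, cB1 n * z^n) z :=
  hasDerivAt_tsum_pow cB HB1 z

lemma hd2 (z : ℂ) :
    HasDerivAt (fun w => ∑' n : ℕ, cB1 n * w^n)
      (∑' n : ℕ, ((n:ℂ)+1) * cB1 (n+1) * z^n) z :=
  hasDerivAt_tsum_pow cB1 HB2 z

theorem stmt17 :
    Differentiable ℂ Bi ∧ Differentiable ℂ (deriv Bi) ∧
    ∀ z : ℂ, deriv (deriv Bi) z = z * Bi z := by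
  have hBi := Bi_eq
  have hderiv : deriv Bi = fun z => ∑' n : ℕ, cB1 n * z^n := by
    funext z; rw [hBi]; exact (hd1 z).deriv
  refine ⟨?_, ?_, ?_⟩
  · rw [hBi]; exact fun z => (hd1 z).differentiableAt
  · rw [hderiv]; exact fun z => (hd2 z).differentiableAt
  · intro z
    have h2 : deriv (deriv Bi) z = ∑' n : ℕ, ((n:ℂ)+1) * cB1 (n+1) * z^n := by
      rw [hderiv]; exact (hd2 z).deriv
    rw [h2, hBi]
    have hsum : Summable (fun n : ℕ => ((n:ℂ)+1) * cB1 (n+1) * z^n) := by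
      apply Summable.of_norm
      refine (HB2 ‖z‖ (norm_nonneg z)).congr fun n => ?_
      rw [norm_mul, norm_mul, norm_pow, normNA]
    rw [Summable.tsum_eq_zero_add hsum]
    have h0 : ((0:ℕ):ℂ)+1 = 1 := by norm_num
    have hfirst : (((0:ℕ):ℂ)+1) * cB1 (0+1) * z^(0:ℕ) = 0 := by
      simp [cB1, cB, biR_two]
    rw [hfirst, zero_add, ← tsum_mul_left]
    refine tsum_congr fun n => ?_
    have i1 : n+1+1+1 = n+3 := by omega
    simp only [cB1, i1]
    rw [← cB_rec n]
    push_cast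
    ring
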